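/- For every integer p ≥ 1 and every real x > 0, coth(px)/sinh(2x) − 1/(2p·sinh²(x)) = 2·∑_{m,n≥0} ( e^{−2(1+2m+pn)x} + e^{−2(1+p+2m+pn)x} − (1/p)·e^{−2(1+m+n)x} ), where the double sum over pairs of nonnegative integers (m, n) converges absolutely. -/
import Mathlib

open Real

lemma geom_pair {a b : ℝ} (ha0 : 0 ≤ a) (ha1 : a < 1) (hb0 : 0 ≤ b) (hb1 : b < 1) (c : ℝ) :
    Summable (fun mn : ℕ × ℕ => c * a ^ mn.1 * b ^ mn.2) ∧
      ∑' mn : ℕ × ℕ, c * a ^ mn.1 * b ^ mn.2 = c * (1 - a)⁻¹ * (1 - b)⁻¹ := by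
  have hf : Summable fun m : ℕ => ‖c * a ^ m‖ := by
    have := (summable_geometric_of_lt_one ha0 ha1).mul_left |c|
    refine this.congr fun m => ?_
    simp [Real.norm_eq_abs, abs_mul, abs_pow, abs_of_nonneg ha0]
  have hg : Summable fun n : ℕ => ‖b ^ n‖ := by
    have := summable_geometric_of_lt_one hb0 hb1
    refine this.congr fun n => ?_
    simp [Real.norm_eq_abs, abs_pow, abs_of_nonneg hb0]
  have hS := summable_mul_of_summable_norm (f := fun m : ℕ => c * a ^ m)
    (g := fun n : ℕ => b ^ n) hf hg
  have hT := tsum_mul_tsum_of_summable_norm (f := fun m : ℕ => c * a ^ m)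
    (g := fun n : ℕ => b ^ n) hf hg
  refine ⟨hS, ?_⟩
  rw [← hT, tsum_mul_left, tsum_geometric_of_lt_one ha0 ha1,
    tsum_geometric_of_lt_one hb0 hb1, mul_assoc]

lemma key_alg (p : ℕ) (hp : 1 ≤ p) (u : ℝ) (hu0 : 0 < u) (hu1 : u < 1) :
    ((u⁻¹ ^ p + u ^ p) / 2) / ((u⁻¹ ^ p - u ^ p) / 2) / ((u⁻¹ * u⁻¹ - u * u) / 2) -
      1 / (2 * p * ((u⁻¹ - u) / 2) ^ 2) =
    2 * ((u * u) * (1 - (u * u) ^ 2)⁻¹ * (1 - (u * u) ^ p)⁻¹ +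
      (u * u) * (u * u) ^ p * (1 - (u * u) ^ 2)⁻¹ * (1 - (u * u) ^ p)⁻¹ -
      (1 / p * (u * u)) * (1 - (u * u))⁻¹ * (1 - (u * u))⁻¹) := by
  have hu : u ≠ 0 := ne_of_gt hu0
  have hp0 : (p : ℝ) ≠ 0 := Nat.cast_ne_zero.mpr (by omega)
  have hui : 1 < u⁻¹ := by
    have h := mul_inv_cancel₀ hu
    have := inv_pos.mpr hu0
    nlinarith
  rw [inv_pow, show (u*u)^p = u^p * u^p by rw [mul_pow]]
  set w := u ^ p with hw
  have hw0 : 0 < w := pow_pos hu0 p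
  have hw1 : w < 1 := pow_lt_one₀ hu0.le hu1 (by omega)
  clear_value w
  have hwne : w ≠ 0 := ne_of_gt hw0
  have hwi : 1 < w⁻¹ := by
    have h := mul_inv_cancel₀ hwne
    have := inv_pos.mpr hw0
    nlinarith
  have h1 : u⁻¹ - u ≠ 0 := by nlinarith
  have h2 : u⁻¹ * u⁻¹ - u * u ≠ 0 := by
    have := inv_pos.mpr hu0
    nlinarith
  have h3 : w⁻¹ - w ≠ 0 := by nlinarith
  have h4 : 1 - u * u ≠ 0 := by nlinarith
  have huu : u * u < 1 := by nlinarith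
  have h5 : 1 - (u * u) ^ 2 ≠ 0 := by
    have h := pow_lt_one₀ (by positivity : (0:ℝ) ≤ u*u) huu (two_ne_zero)
    exact ne_of_gt (by linarith)
  have h6 : 1 - w * w ≠ 0 := by nlinarith
  have hX : (1 - w ^ 2 + (w ^ 2 * u ^ 4 - u ^ 4)) ≠ 0 := by
    rw [show (1 - w ^ 2 + (w ^ 2 * u ^ 4 - u ^ 4)) = (1 - (u*u)^2) * (1 - w*w) by ring]
    exact mul_ne_zero h5 h6
  have hY : (1 - w*w) * (1 - u*u*(u*u)) ≠ 0 := by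
    apply mul_ne_zero h6
    nlinarith [mul_pos (mul_pos hu0 hu0) (mul_pos hu0 hu0)]
  field_simp [hX]

/-- The elliptic fixed-point integrand `g_p(x) = coth(px)/sinh(2x) - 1/(2p sinh²x)`. -/
noncomputable def ellipticIntegrand (p : ℕ) (x : ℝ) : ℝ :=
  Real.cosh (p * x) / Real.sinh (p * x) / Real.sinh (2 * x) -
    1 / (2 * p * Real.sinh x ^ 2)

theorem elliptic_integrand_exp_series (p : ℕ) (hp : 1 ≤ p) (x : ℝ) (hx : 0 < x) :
    (Summable fun mn : ℕ × ℕ =>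
        |Real.exp (-(2 * (1 + 2 * mn.1 + p * mn.2) * x)) +
            Real.exp (-(2 * (1 + p + 2 * mn.1 + p * mn.2) * x)) -
            (1 / p) * Real.exp (-(2 * (1 + mn.1 + mn.2) * x))|) ∧
    ellipticIntegrand p x =
      2 * ∑' mn : ℕ × ℕ,
          (Real.exp (-(2 * (1 + 2 * mn.1 + p * mn.2) * x)) +
            Real.exp (-(2 * (1 + p + 2 * mn.1 + p * mn.2) * x)) -
            (1 / p) * Real.exp (-(2 * (1 + mn.1 + mn.2) * x))) := by
  set q : ℝ := Real.exp (-(2 * x)) with hqdef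
  have hq0 : 0 < q := Real.exp_pos _
  have hq1 : q < 1 := by
    rw [hqdef, show (1:ℝ) = Real.exp 0 by rw [Real.exp_zero]]
    exact Real.exp_lt_exp.mpr (by linarith)
  have hq20 : (0:ℝ) ≤ q ^ 2 := by positivity
  have hq21 : q ^ 2 < 1 := pow_lt_one₀ hq0.le hq1 two_ne_zero
  have hqp0 : (0:ℝ) ≤ q ^ p := by positivity
  have hqp1 : q ^ p < 1 := pow_lt_one₀ hq0.le hq1 (by omega)
  -- decomposition of exponentials
  have q2 : Real.exp (2 * -(2 * x)) = q ^ 2 := by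
    rw [hqdef, ← Real.exp_nat_mul]
    norm_num
  have qp : Real.exp ((p:ℝ) * -(2 * x)) = q ^ p := by
    rw [Real.exp_nat_mul, hqdef]
  have e1 : ∀ m n : ℕ, Real.exp (-(2 * (1 + 2 * (m:ℝ) + (p:ℝ) * (n:ℝ)) * x)) =
      q * (q ^ 2) ^ m * (q ^ p) ^ n := by
    intro m n
    rw [show -(2 * (1 + 2 * (m:ℝ) + (p:ℝ) * (n:ℝ)) * x) =
        -(2 * x) + (m:ℝ) * (2 * -(2 * x)) + (n:ℝ) * ((p:ℝ) * -(2 * x)) by ring,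
      Real.exp_add, Real.exp_add, Real.exp_nat_mul, Real.exp_nat_mul, q2, qp, hqdef]
  have e2 : ∀ m n : ℕ, Real.exp (-(2 * (1 + (p:ℝ) + 2 * (m:ℝ) + (p:ℝ) * (n:ℝ)) * x)) =
      (q * q ^ p) * (q ^ 2) ^ m * (q ^ p) ^ n := by
    intro m n
    rw [show -(2 * (1 + (p:ℝ) + 2 * (m:ℝ) + (p:ℝ) * (n:ℝ)) * x) =
        (-(2 * x) + (p:ℝ) * -(2 * x)) + (m:ℝ) * (2 * -(2 * x)) + (n:ℝ) * ((p:ℝ) * -(2 * x)) by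
          ring,
      Real.exp_add, Real.exp_add, Real.exp_add, qp, Real.exp_nat_mul, Real.exp_nat_mul, q2, qp,
      hqdef]
  have e3 : ∀ m n : ℕ, Real.exp (-(2 * (1 + (m:ℝ) + (n:ℝ)) * x)) = q * q ^ m * q ^ n := by
    intro m n
    rw [show -(2 * (1 + (m:ℝ) + (n:ℝ)) * x) =
        -(2 * x) + (m:ℝ) * -(2 * x) + (n:ℝ) * -(2 * x) by ring,
      Real.exp_add, Real.exp_add, Real.exp_nat_mul, Real.exp_nat_mul, hqdef]
  obtain ⟨S1, T1⟩ := geom_pair hq20 hq21 hqp0 hqp1 q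
  obtain ⟨S2, T2⟩ := geom_pair hq20 hq21 hqp0 hqp1 (q * q ^ p)
  obtain ⟨S3, T3⟩ := geom_pair hq0.le hq1 hq0.le hq1 (1 / (p:ℝ) * q)
  have hF1 : Summable fun mn : ℕ × ℕ =>
      Real.exp (-(2 * (1 + 2 * (mn.1:ℝ) + (p:ℝ) * (mn.2:ℝ)) * x)) :=
    S1.congr fun mn => (e1 mn.1 mn.2).symm
  have hF2 : Summable fun mn : ℕ × ℕ =>
      Real.exp (-(2 * (1 + (p:ℝ) + 2 * (mn.1:ℝ) + (p:ℝ) * (mn.2:ℝ)) * x)) :=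
    S2.congr fun mn => (e2 mn.1 mn.2).symm
  have hF3 : Summable fun mn : ℕ × ℕ =>
      (1 / (p:ℝ)) * Real.exp (-(2 * (1 + (mn.1:ℝ) + (mn.2:ℝ)) * x)) :=
    S3.congr fun mn => by rw [e3 mn.1 mn.2]; ring
  have hp0 : (0:ℝ) ≤ 1 / (p:ℝ) := by positivity
  constructor
  · refine Summable.of_nonneg_of_le (fun _ => abs_nonneg _) (fun mn => ?_)
      ((hF1.add hF2).add hF3)
    have hA := Real.exp_pos (-(2 * (1 + 2 * (mn.1:ℝ) + (p:ℝ) * (mn.2:ℝ)) * x))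
    have hB := Real.exp_pos (-(2 * (1 + (p:ℝ) + 2 * (mn.1:ℝ) + (p:ℝ) * (mn.2:ℝ)) * x))
    have hC := mul_nonneg hp0 (Real.exp_pos (-(2 * (1 + (mn.1:ℝ) + (mn.2:ℝ)) * x))).le
    refine le_trans (abs_le.mpr ⟨by linarith, by linarith⟩) (le_refl _)
  · have hts : (∑' mn : ℕ × ℕ,
        (Real.exp (-(2 * (1 + 2 * (mn.1:ℝ) + (p:ℝ) * (mn.2:ℝ)) * x)) +
          Real.exp (-(2 * (1 + (p:ℝ) + 2 * (mn.1:ℝ) + (p:ℝ) * (mn.2:ℝ)) * x)) -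
          (1 / (p:ℝ)) * Real.exp (-(2 * (1 + (mn.1:ℝ) + (mn.2:ℝ)) * x)))) =
        (q * (1 - q ^ 2)⁻¹ * (1 - q ^ p)⁻¹ +
          (q * q ^ p) * (1 - q ^ 2)⁻¹ * (1 - q ^ p)⁻¹ -
          (1 / (p:ℝ) * q) * (1 - q)⁻¹ * (1 - q)⁻¹) := by
      rw [Summable.tsum_sub (hF1.add hF2) hF3, Summable.tsum_add hF1 hF2]
      rw [tsum_congr (fun mn : ℕ × ℕ => e1 mn.1 mn.2), T1,
        tsum_congr (fun mn : ℕ × ℕ => e2 mn.1 mn.2), T2,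
        tsum_congr (fun mn : ℕ × ℕ => by rw [e3 mn.1 mn.2]; ring :
          ∀ mn : ℕ × ℕ, (1 / (p:ℝ)) * Real.exp (-(2 * (1 + (mn.1:ℝ) + (mn.2:ℝ)) * x)) =
            (1 / (p:ℝ) * q) * q ^ mn.1 * q ^ mn.2), T3]
    rw [hts]
    -- now the algebraic identity
    have hu0 : 0 < Real.exp (-x) := Real.exp_pos _
    have hu1 : Real.exp (-x) < 1 := by
      rw [show (1:ℝ) = Real.exp 0 by rw [Real.exp_zero]]
      exact Real.exp_lt_exp.mpr (by linarith)
    have main := key_alg p hp (Real.exp (-x)) hu0 hu1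
    have hx1 : Real.exp x = (Real.exp (-x))⁻¹ := by rw [Real.exp_neg, inv_inv]
    have hpx : Real.exp ((p:ℝ) * x) = (Real.exp (-x))⁻¹ ^ p := by
      rw [Real.exp_nat_mul, hx1]
    have hpx' : Real.exp (-((p:ℝ) * x)) = (Real.exp (-x)) ^ p := by
      rw [show -((p:ℝ) * x) = (p:ℝ) * (-x) by ring, Real.exp_nat_mul]
    have h2x : Real.exp (2 * x) = (Real.exp (-x))⁻¹ * (Real.exp (-x))⁻¹ := by
      rw [show (2:ℝ) * x = x + x by ring, Real.exp_add, hx1]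
    have h2x' : q = Real.exp (-x) * Real.exp (-x) := by
      rw [hqdef, show -(2 * x) = -x + -x by ring, Real.exp_add]
    rw [ellipticIntegrand, Real.cosh_eq, Real.sinh_eq, Real.sinh_eq, Real.sinh_eq,
      hpx, hpx', h2x, hx1, h2x']
    rw [show Real.exp (-(2 * x)) = Real.exp (-x) * Real.exp (-x) from h2x']
    exact main
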